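/- arXiv:2107.11549 — 4 statements merged into one kernel-verified Lean document; each statement's English description precedes it below -/
import Mathlib

section
/- Let F be a differential field of characteristic zero and K a differential field extension of F generated as a field extension by an element y together with all its derivatives. Suppose y, y', …, y^(n-1) are algebraically independent over F and y^(n) is algebraic over the subring F[y, y', …, y^(n-1)]. Then there exists a nonzero element r of F[y, y', …, y^(n)] such that the localization F[y, y', …, y^(n), r⁻¹] is a differential subring of K (i.e., closed under the derivation) whose field of fractions is K. -/
open Polynomial

section aux

variable {K : Type*} [Field K] (d : K → K)
    (hadd : ∀ x y : K, d (x + y) = d x + d y)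
    (hmul : ∀ x y : K, d (x * y) = d x * y + x * d y)

include hadd in
lemma aux_d0 : d 0 = 0 := by
  have h : d 0 = d 0 + d 0 := by simpa using hadd 0 0
  have h2 : d 0 + 0 = d 0 + d 0 := by simpa using h
  exact (add_left_cancel h2).symm

include hmul in
lemma aux_d1 : d 1 = 0 := by
  have h : d 1 = d 1 + d 1 := by simpa using hmul 1 1
  have h2 : d 1 + 0 = d 1 + d 1 := by simpa using h
  exact (add_left_cancel h2).symm

include hadd hmul in
lemma aux_dneg (x : K) : d (-x) = - d x := by
  have h : d x + d (-x) = 0 := by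
    have := hadd x (-x); simpa [aux_d0 d hadd] using this.symm
  linear_combination h

include hadd hmul in
lemma aux_dinv {r : K} (hr : r ≠ 0) : d r⁻¹ = -(d r * r⁻¹ * r⁻¹) := by
  have h : d r * r⁻¹ + r * d r⁻¹ = 0 := by
    have := hmul r r⁻¹
    rw [mul_inv_cancel₀ hr, aux_d1 d hmul] at this
    exact this.symm
  have h2 : r * d r⁻¹ = -(d r * r⁻¹) := by linear_combination h
  calc d r⁻¹ = r⁻¹ * (r * d r⁻¹) := by rw [← mul_assoc, inv_mul_cancel₀ hr, one_mul]
    _ = -(d r * r⁻¹ * r⁻¹) := by rw [h2]; ring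

include hadd hmul in
/-- If all generators of a closure lie in a subring `C` together with their derivatives,
then `d` maps the closure into `C`. -/
lemma aux_key (C : Subring K) (s : Set K) (hs : ∀ g ∈ s, g ∈ C)
    (hds : ∀ g ∈ s, d g ∈ C) : ∀ x ∈ Subring.closure s, x ∈ C ∧ d x ∈ C := by
  let T : Subring K :=
    { carrier := {x : K | x ∈ C ∧ d x ∈ C}
      one_mem' := ⟨C.one_mem, by rw [aux_d1 d hmul]; exact C.zero_mem⟩
      zero_mem' := ⟨C.zero_mem, by rw [aux_d0 d hadd]; exact C.zero_mem⟩
      add_mem' := fun ha hb => ⟨C.add_mem ha.1 hb.1, by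
        rw [hadd]; exact C.add_mem ha.2 hb.2⟩
      mul_mem' := fun ha hb => ⟨C.mul_mem ha.1 hb.1, by
        rw [hmul]; exact C.add_mem (C.mul_mem ha.2 hb.1) (C.mul_mem ha.1 hb.2)⟩
      neg_mem' := fun ha => ⟨C.neg_mem ha.1, by
        rw [aux_dneg d hadd hmul]; exact C.neg_mem ha.2⟩ }
  have hT : Subring.closure s ≤ T := Subring.closure_le.mpr fun g hg => ⟨hs g hg, hds g hg⟩
  intro x hx
  exact hT hx

include hadd hmul in
lemma aux_dpow (a : K) : ∀ i : ℕ, d (a ^ i) = (i : K) * a ^ (i - 1) * d a := by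
  intro i
  induction i with
  | zero => simp [aux_d1 d hmul]
  | succ i ih =>
    rw [pow_succ, hmul, ih]
    rcases Nat.eq_zero_or_pos i with h | h
    · subst h; simp
    · have : a ^ (i - 1) * a = a ^ i := by
        rw [← pow_succ, Nat.sub_add_cancel h]
      push_cast
      linear_combination (i : K) * d a * this

include hadd hmul in
lemma aux_dev (a : K) (q : K[X]) :
    d (q.eval a) = (derivative q).eval a * d a + q.sum (fun i c => d c * a ^ i) := by
  induction q using Polynomial.induction_on' with
  | add p q hp hq =>
    rw [eval_add, hadd, hp, hq, derivative_add, eval_add,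
      Polynomial.sum_add_index _ _ _ (fun i => by rw [aux_d0 d hadd]; ring)
        (fun i b c => by rw [hadd]; ring)]
    ring
  | monomial i c =>
    rw [eval_monomial, hmul, aux_dpow d hadd hmul, derivative_monomial, eval_monomial,
      Polynomial.sum_monomial_index _ _ (by rw [aux_d0 d hadd]; ring)]
    ring

end aux

/-- Let `F ⊆ K` be differential fields of characteristic zero with
`K = F⟨y⟩` generated by `y` and its derivatives.  If `y, y', …, y^(n-1)` are
algebraically independent over `F` and `y^(n)` is algebraic over `F[y, …, y^(n-1)]`,
then there is a nonzero `r ∈ F[y, …, y^(n)]` such that the localization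
`F[y, …, y^(n), r⁻¹]` is a differential subring of `K` whose field of fractions is
`K`. -/
theorem stmt_1 {K : Type*} [Field K] [CharZero K] (F : Subfield K) (d : K → K)
    (hadd : ∀ x y : K, d (x + y) = d x + d y)
    (hmul : ∀ x y : K, d (x * y) = d x * y + x * d y)
    (hFd : ∀ x ∈ F, d x ∈ F)
    (y : K) (n : ℕ)
    -- K is generated as a field by F, y and all derivatives of y:
    (hgen : Subfield.closure ((F : Set K) ∪ {z : K | ∃ k : ℕ, z = d^[k] y}) = ⊤)
    -- y, y', …, y^(n-1) are algebraically independent over F: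
    (hindep : AlgebraicIndependent F (fun i : Fin n => d^[(i : ℕ)] y))
    -- y^(n) is algebraic over the subring F[y, y', …, y^(n-1)]:
    (halg : ∃ p : Polynomial K, p ≠ 0 ∧
      (∀ i, p.coeff i ∈ Subring.closure ((F : Set K) ∪ {z : K | ∃ k < n, z = d^[k] y})) ∧
      p.eval (d^[n] y) = 0) :
    ∃ r ∈ Subring.closure ((F : Set K) ∪ {z : K | ∃ k ≤ n, z = d^[k] y}), r ≠ 0 ∧
      (∀ x ∈ Subring.closure
          ((F : Set K) ∪ {z : K | ∃ k ≤ n, z = d^[k] y} ∪ {r⁻¹}),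
        d x ∈ Subring.closure
          ((F : Set K) ∪ {z : K | ∃ k ≤ n, z = d^[k] y} ∪ {r⁻¹})) ∧
      ∀ z : K, ∃ p ∈ Subring.closure
          ((F : Set K) ∪ {z : K | ∃ k ≤ n, z = d^[k] y} ∪ {r⁻¹}),
        ∃ q ∈ Subring.closure
          ((F : Set K) ∪ {z : K | ∃ k ≤ n, z = d^[k] y} ∪ {r⁻¹}),
        q ≠ 0 ∧ z = p / q := by
  classical
  set a : K := d^[n] y with ha
  set s₀ : Set K := (F : Set K) ∪ {z : K | ∃ k < n, z = d^[k] y} with hs₀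
  set s₁ : Set K := (F : Set K) ∪ {z : K | ∃ k ≤ n, z = d^[k] y} with hs₁
  set A₀ : Subring K := Subring.closure s₀ with hA₀
  set A : Subring K := Subring.closure s₁ with hA
  have hs01 : s₀ ⊆ s₁ := by
    apply Set.union_subset_union_right
    rintro z ⟨k, hk, rfl⟩; exact ⟨k, le_of_lt hk, rfl⟩
  have hA₀A : A₀ ≤ A := Subring.closure_mono hs01
  have hFA : ∀ x ∈ F, x ∈ A := fun x hx => Subring.subset_closure (Or.inl hx)
  have hyA : ∀ k, k ≤ n → d^[k] y ∈ A := fun k hk =>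
    Subring.subset_closure (Or.inr ⟨k, hk, rfl⟩)
  have haA : a ∈ A := hyA n le_rfl
  -- d maps A₀ into A
  have hdA₀ : ∀ x ∈ A₀, d x ∈ A := by
    intro x hx
    refine (aux_key d hadd hmul A s₀ ?_ ?_ x hx).2
    · intro g hg; exact Subring.subset_closure (hs01 hg)
    · rintro g (hg | ⟨k, hk, rfl⟩)
      · exact hFA _ (hFd _ hg)
      · rw [← Function.iterate_succ_apply' d k y]
        exact hyA _ hk
  -- evaluation membership
  have evmem : ∀ (q : K[X]) (B : Subring K), (∀ i, q.coeff i ∈ B) → a ∈ B →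
      q.eval a ∈ B := by
    intro q B hc haB
    rw [Polynomial.eval_eq_sum, Polynomial.sum]
    exact Subring.sum_mem _ fun i _ => B.mul_mem (hc i) (B.pow_mem haB i)
  -- minimal degree polynomial
  have hex : ∃ m : ℕ, ∃ p : K[X], p ≠ 0 ∧ (∀ i, p.coeff i ∈ A₀) ∧
      p.eval a = 0 ∧ p.natDegree = m := by
    obtain ⟨p₀, h1, h2, h3⟩ := halg
    exact ⟨p₀.natDegree, p₀, h1, h2, h3, rfl⟩
  obtain ⟨p, hpne, hpc, hpe, hpd⟩ := Nat.find_spec hex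
  have hdeg : p.natDegree ≠ 0 := by
    intro h
    have hC : p = Polynomial.C (p.coeff 0) := Polynomial.eq_C_of_natDegree_eq_zero h
    rw [hC, Polynomial.eval_C] at hpe
    rw [hC, hpe, map_zero] at hpne
    exact hpne rfl
  have hder_ne : Polynomial.derivative p ≠ 0 := fun h =>
    hdeg (Polynomial.natDegree_eq_zero_of_derivative_eq_zero h)
  have hderc : ∀ i, (Polynomial.derivative p).coeff i ∈ A₀ := by
    intro i
    rw [Polynomial.coeff_derivative]
    exact A₀.mul_mem (hpc _) (A₀.add_mem (natCast_mem A₀ i) A₀.one_mem)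
  set r : K := (Polynomial.derivative p).eval a with hr
  have hrne : r ≠ 0 := by
    intro h0
    have hwit : ∃ q : K[X], q ≠ 0 ∧ (∀ i, q.coeff i ∈ A₀) ∧
        q.eval a = 0 ∧ q.natDegree = (Polynomial.derivative p).natDegree :=
      ⟨Polynomial.derivative p, hder_ne, hderc, h0, rfl⟩
    have hle : Nat.find hex ≤ (Polynomial.derivative p).natDegree := Nat.find_le hwit
    have hlt : (Polynomial.derivative p).natDegree < p.natDegree :=
      Polynomial.natDegree_derivative_lt hdeg
    omega
  have hrA : r ∈ A := evmem _ A (fun i => hA₀A (hderc i)) haA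
  -- the key relation: r * d a ∈ A
  have hkey : r * d a ∈ A := by
    have hdev := aux_dev d hadd hmul a p
    rw [hpe, aux_d0 d hadd] at hdev
    have hsum : p.sum (fun i c => d c * a ^ i) ∈ A := by
      rw [Polynomial.sum]
      exact Subring.sum_mem _ fun i _ => A.mul_mem (hdA₀ _ (hpc i)) (A.pow_mem haA i)
    have : r * d a = -(p.sum fun i c => d c * a ^ i) := by linear_combination -hdev
    rw [this]
    exact A.neg_mem hsum
  refine ⟨r, hrA, hrne, ?_⟩
  set s₂ : Set K := s₁ ∪ {r⁻¹} with hs₂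
  set S : Subring K := Subring.closure s₂ with hS
  have hAS : A ≤ S := Subring.closure_mono Set.subset_union_left
  have hrinvS : r⁻¹ ∈ S := Subring.subset_closure (Or.inr rfl)
  have hdaS : d a ∈ S := by
    have : d a = (r * d a) * r⁻¹ := by field_simp
    rw [this]
    exact S.mul_mem (hAS hkey) hrinvS
  -- d maps A into S
  have hdAS : ∀ x ∈ A, d x ∈ S := by
    intro x hx
    refine (aux_key d hadd hmul S s₁ (fun g hg => hAS (Subring.subset_closure hg)) ?_ x hx).2
    rintro g (hg | ⟨k, hk, rfl⟩)
    · exact hAS (hFA _ (hFd _ hg))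
    · rcases lt_or_eq_of_le hk with h | h
      · rw [← Function.iterate_succ_apply' d k y]
        exact hAS (hyA _ h)
      · subst h
        exact hdaS
  -- d maps S into S
  have hdS : ∀ x ∈ S, d x ∈ S := by
    intro x hx
    refine (aux_key d hadd hmul S s₂ (fun g hg => Subring.subset_closure hg) ?_ x hx).2
    rintro g (hg | hg)
    · exact hdAS g (Subring.subset_closure hg)
    · rw [Set.mem_singleton_iff] at hg
      subst hg
      rw [aux_dinv d hadd hmul hrne]
      exact S.neg_mem (S.mul_mem (S.mul_mem (hdAS r hrA) hrinvS) hrinvS)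
  refine ⟨hdS, ?_⟩
  -- all derivatives of y are in S
  have hyS : ∀ k, d^[k] y ∈ S := by
    intro k
    induction k with
    | zero => exact hAS (hyA 0 (Nat.zero_le n))
    | succ k ih =>
      rw [Function.iterate_succ_apply' d k y]
      exact hdS _ ih
  -- the field of fractions of S is K
  let D : Subfield K :=
    { carrier := {z : K | ∃ p ∈ S, ∃ q ∈ S, q ≠ 0 ∧ z = p / q}
      one_mem' := ⟨1, S.one_mem, 1, S.one_mem, one_ne_zero, by norm_num⟩
      zero_mem' := ⟨0, S.zero_mem, 1, S.one_mem, one_ne_zero, by norm_num⟩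
      add_mem' := by
        rintro x y ⟨p1, hp1, q1, hq1, hq1n, rfl⟩ ⟨p2, hp2, q2, hq2, hq2n, rfl⟩
        exact ⟨p1 * q2 + p2 * q1, S.add_mem (S.mul_mem hp1 hq2) (S.mul_mem hp2 hq1),
          q1 * q2, S.mul_mem hq1 hq2, mul_ne_zero hq1n hq2n, by field_simp; try ring⟩
      mul_mem' := by
        rintro x y ⟨p1, hp1, q1, hq1, hq1n, rfl⟩ ⟨p2, hp2, q2, hq2, hq2n, rfl⟩
        exact ⟨p1 * p2, S.mul_mem hp1 hp2, q1 * q2, S.mul_mem hq1 hq2,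
          mul_ne_zero hq1n hq2n, by field_simp⟩
      neg_mem' := by
        rintro x ⟨p1, hp1, q1, hq1, hq1n, rfl⟩
        exact ⟨-p1, S.neg_mem hp1, q1, hq1, hq1n, by field_simp⟩
      inv_mem' := by
        rintro x ⟨p1, hp1, q1, hq1, hq1n, rfl⟩
        rcases eq_or_ne p1 0 with h | h
        · exact ⟨0, S.zero_mem, 1, S.one_mem, one_ne_zero, by simp [h]⟩
        · exact ⟨q1, hq1, p1, hp1, h, by rw [inv_div]⟩ }
  intro z
  have hz : z ∈ D := by
    have hsub : Subfield.closure ((F : Set K) ∪ {z : K | ∃ k : ℕ, z = d^[k] y}) ≤ D := by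
      apply Subfield.closure_le.mpr
      rintro g (hg | ⟨k, rfl⟩)
      · exact ⟨g, hAS (hFA _ hg), 1, S.one_mem, one_ne_zero, by norm_num⟩
      · exact ⟨d^[k] y, hyS k, 1, S.one_mem, one_ne_zero, by norm_num⟩
    exact hsub (hgen ▸ Subfield.mem_top z)
  exact hz
end

section
/- Let F be a differential field of characteristic zero and K a differential field extension of F that is finitely generated as a differential field extension (i.e., K = F⟨y₁, …, y_t⟩ for finitely many elements y_i). If K has finite transcendence degree over F, then K contains a differential F-subalgebra R (a subring containing F and closed under the derivation) that is finitely generated as an F-algebra and whose field of fractions equals K. -/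
section Aux
variable {K : Type*} [Field K] (d : K → K)

theorem d_zero (hadd : ∀ x y : K, d (x + y) = d x + d y) : d 0 = 0 := by
  have h := hadd 0 0
  rw [add_zero] at h
  exact (left_eq_add.mp h)

theorem d_one (hmul : ∀ x y : K, d (x * y) = d x * y + x * d y) : d 1 = 0 := by
  have h := hmul 1 1
  rw [mul_one, mul_one, one_mul] at h
  exact (left_eq_add.mp h)

theorem d_neg (hadd : ∀ x y : K, d (x + y) = d x + d y) (x : K) : d (-x) = - d x := by
  have h := hadd x (-x)
  rw [add_neg_cancel, d_zero d hadd] at h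
  exact (eq_neg_of_add_eq_zero_right h.symm)

theorem d_inv (hadd : ∀ x y : K, d (x + y) = d x + d y)
    (hmul : ∀ x y : K, d (x * y) = d x * y + x * d y) (x : K) (hx : x ≠ 0) :
    d x⁻¹ = -(d x * x⁻¹ * x⁻¹) := by
  have h := hmul x x⁻¹
  rw [mul_inv_cancel₀ hx, d_one d hmul] at h
  have h2 : x * d x⁻¹ = -(d x * x⁻¹) := eq_neg_of_add_eq_zero_right h.symm
  have h3 : d x⁻¹ = x⁻¹ * (x * d x⁻¹) := by rw [← mul_assoc, inv_mul_cancel₀ hx, one_mul]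
  rw [h3, h2]; ring

theorem d_pow (hadd : ∀ x y : K, d (x + y) = d x + d y)
    (hmul : ∀ x y : K, d (x * y) = d x * y + x * d y) (x : K) :
    ∀ n : ℕ, d (x ^ n) = n * x ^ (n - 1) * d x
  | 0 => by simp [d_one d hmul]
  | n+1 => by
    rw [pow_succ, hmul, d_pow hadd hmul x n]
    cases n with
    | zero => simp
    | succ m =>
      have h : x ^ m * x = x ^ (m + 1) := (pow_succ x m).symm
      simp only [Nat.add_sub_cancel]
      push_cast
      linear_combination ((m : K) + 1) * d x * h

theorem d_eval (hadd : ∀ x y : K, d (x + y) = d x + d y)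
    (hmul : ∀ x y : K, d (x * y) = d x * y + x * d y) (p : Polynomial K) (x : K) :
    d (p.eval x) = (p.sum fun i c => d c * x ^ i) + p.derivative.eval x * d x := by
  induction p using Polynomial.induction_on' with
  | add p q hp hq =>
    rw [Polynomial.eval_add, hadd, hp, hq, Polynomial.derivative_add, Polynomial.eval_add,
      Polynomial.sum_add_index p q _ (fun i => by rw [d_zero d hadd, zero_mul])
        (fun a b₁ b₂ => by rw [hadd, add_mul])]
    ring
  | monomial n a =>
    rw [Polynomial.eval_monomial, hmul, d_pow d hadd hmul, Polynomial.derivative_monomial,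
      Polynomial.eval_monomial,
      Polynomial.sum_monomial_index a _ (by rw [d_zero d hadd, zero_mul])]
    ring

theorem eval_mem_subfield (M : Subfield K) (p : Polynomial K) (hc : ∀ i, p.coeff i ∈ M)
    (x : K) (hx : x ∈ M) : p.eval x ∈ M := by
  rw [Polynomial.eval_eq_sum_range]
  exact sum_mem fun i _ => mul_mem (hc i) (pow_mem hx i)

theorem subfield_dclosed (hadd : ∀ x y : K, d (x + y) = d x + d y)
    (hmul : ∀ x y : K, d (x * y) = d x * y + x * d y)
    (G : Set K) (T : Subfield K) (hG : G ⊆ T) (hdG : ∀ g ∈ G, d g ∈ T) :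
    ∀ x ∈ Subfield.closure G, x ∈ T ∧ d x ∈ T := by
  intro x hx
  induction hx using Subfield.closure_induction with
  | mem z hz => exact ⟨hG hz, hdG z hz⟩
  | one => exact ⟨one_mem T, by rw [d_one d hmul]; exact zero_mem T⟩
  | add a b _ _ ha hb => exact ⟨add_mem ha.1 hb.1, by rw [hadd]; exact add_mem ha.2 hb.2⟩
  | neg a _ ha => exact ⟨neg_mem ha.1, by rw [d_neg d hadd]; exact neg_mem ha.2⟩
  | inv a _ ha =>
    refine ⟨inv_mem ha.1, ?_⟩
    rcases eq_or_ne a 0 with rfl | h0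
    · rw [inv_zero, d_zero d hadd]; exact zero_mem T
    · rw [d_inv d hadd hmul a h0]
      exact neg_mem (mul_mem (mul_mem ha.2 (inv_mem ha.1)) (inv_mem ha.1))
  | mul a b _ _ ha hb =>
    exact ⟨mul_mem ha.1 hb.1, by rw [hmul]; exact add_mem (mul_mem ha.2 hb.1) (mul_mem ha.1 hb.2)⟩

theorem subring_dclosed (hadd : ∀ x y : K, d (x + y) = d x + d y)
    (hmul : ∀ x y : K, d (x * y) = d x * y + x * d y)
    (G : Set K) (T : Subring K) (hG : G ⊆ T) (hdG : ∀ g ∈ G, d g ∈ T) :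
    ∀ x ∈ Subring.closure G, x ∈ T ∧ d x ∈ T := by
  intro x hx
  induction hx using Subring.closure_induction with
  | mem z hz => exact ⟨hG hz, hdG z hz⟩
  | zero => exact ⟨zero_mem T, by rw [d_zero d hadd]; exact zero_mem T⟩
  | one => exact ⟨one_mem T, by rw [d_one d hmul]; exact zero_mem T⟩
  | add a b _ _ ha hb => exact ⟨add_mem ha.1 hb.1, by rw [hadd]; exact add_mem ha.2 hb.2⟩
  | neg a _ ha => exact ⟨neg_mem ha.1, by rw [d_neg d hadd]; exact neg_mem ha.2⟩
  | mul a b _ _ ha hb =>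
    exact ⟨mul_mem ha.1 hb.1, by rw [hmul]; exact add_mem (mul_mem ha.2 hb.1) (mul_mem ha.1 hb.2)⟩

end Aux



theorem dx_mem_of_algebraic {K : Type*} [Field K] [CharZero K] (d : K → K)
    (hadd : ∀ x y : K, d (x + y) = d x + d y)
    (hmul : ∀ x y : K, d (x * y) = d x * y + x * d y)
    (L M : Subfield K) (hLM : ∀ c ∈ L, c ∈ M ∧ d c ∈ M)
    (x : K) (hxM : x ∈ M)
    (hx : ∃ p : Polynomial K, p ≠ 0 ∧ (∀ i, p.coeff i ∈ L) ∧ p.eval x = 0) :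
    d x ∈ M := by
  obtain ⟨p, hp0, hpc, hpe⟩ := hx
  suffices h : ∀ n : ℕ, ∀ p : Polynomial K, p.natDegree ≤ n → p ≠ 0 →
      (∀ i, p.coeff i ∈ L) → p.eval x = 0 → d x ∈ M from h p.natDegree p le_rfl hp0 hpc hpe
  intro n
  induction n with
  | zero =>
    intro p hdeg hp0 hpc hpe
    exfalso
    have hc : p = Polynomial.C (p.coeff 0) := Polynomial.eq_C_of_natDegree_le_zero hdeg
    rw [hc, Polynomial.eval_C] at hpe
    rw [hc, hpe, map_zero] at hp0
    exact hp0 rfl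
  | succ n ih =>
    intro p hdeg hp0 hpc hpe
    have hdercoef : ∀ i, p.derivative.coeff i ∈ L := by
      intro i
      rw [Polynomial.coeff_derivative]
      exact mul_mem (hpc (i+1)) (by push_cast; exact add_mem (natCast_mem L i) (one_mem L))
    by_cases hd0 : p.derivative.eval x = 0
    · have hder0 : p.derivative ≠ 0 := by
        intro h
        have h1 : p.natDegree = 0 := Polynomial.natDegree_eq_zero_of_derivative_eq_zero h
        have hc : p = Polynomial.C (p.coeff 0) := Polynomial.eq_C_of_natDegree_eq_zero h1
        rw [hc, Polynomial.eval_C] at hpe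
        rw [hc, hpe, map_zero] at hp0
        exact hp0 rfl
      have hlt : p.derivative.natDegree < p.natDegree :=
        Polynomial.natDegree_derivative_lt
          (fun h => hder0 (Polynomial.derivative_of_natDegree_zero h))
      exact ih p.derivative (by omega) hder0 hdercoef hd0
    · have key := d_eval d hadd hmul p x
      rw [hpe, d_zero d hadd] at key
      have hS : (p.sum fun i c => d c * x ^ i) ∈ M := by
        rw [Polynomial.sum_def]
        exact sum_mem fun i _ => mul_mem (hLM _ (hpc i)).2 (pow_mem hxM i)
      have hE : p.derivative.eval x ∈ M :=
        eval_mem_subfield _ _ (fun i => (hLM _ (hdercoef i)).1) x hxM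
      have hdx : d x = (-(p.sum fun i c => d c * x ^ i)) * (p.derivative.eval x)⁻¹ := by
        field_simp
        linear_combination -key
      rw [hdx]
      exact mul_mem (neg_mem hS) (inv_mem hE)

/-- Let `F ⊆ K` be differential fields of characteristic zero with
`K = F⟨y₁, …, y_t⟩` finitely generated as a differential field extension, and suppose
`K` has finite transcendence degree over `F` (there is a finite subset over which `K`
is algebraic).  Then `K` contains a differential `F`-subalgebra, finitely generated as
an `F`-algebra, whose field of fractions is `K`. -/
theorem stmt_2 {K : Type*} [Field K] [CharZero K] (F : Subfield K) (d : K → K)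
    (hadd : ∀ x y : K, d (x + y) = d x + d y)
    (hmul : ∀ x y : K, d (x * y) = d x * y + x * d y)
    (hFd : ∀ x ∈ F, d x ∈ F)
    (t : ℕ) (y : Fin t → K)
    -- K is generated as a differential field extension of F by y₁, …, y_t:
    (hgen : Subfield.closure
      ((F : Set K) ∪ {z : K | ∃ i : Fin t, ∃ k : ℕ, z = d^[k] (y i)}) = ⊤)
    -- finite transcendence degree: K is algebraic over a finitely generated subfield
    (htr : ∃ s : Finset K, ∀ x : K,
      ∃ p : Polynomial K, p ≠ 0 ∧
        (∀ i, p.coeff i ∈ Subfield.closure ((F : Set K) ∪ (s : Set K))) ∧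
        p.eval x = 0) :
    ∃ R : Subring K, (F : Set K) ⊆ (R : Set K) ∧ (∀ x ∈ R, d x ∈ R) ∧
      (∃ s : Finset K, R = Subring.closure ((F : Set K) ∪ (s : Set K))) ∧
      ∀ z : K, ∃ p ∈ R, ∃ q ∈ R, q ≠ 0 ∧ z = p / q := by
  classical
  obtain ⟨s, htr'⟩ := htr
  set T : Finset K := (s ∪ s.image d) ∪ Finset.image y Finset.univ with hTdef
  set M : Subfield K := Subfield.closure ((F : Set K) ∪ (T : Set K)) with hMdef
  have hFM : (F : Set K) ⊆ (M : Set K) :=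
    Set.subset_union_left.trans Subfield.subset_closure
  have hTM : ∀ u ∈ T, (u : K) ∈ M := fun u hu =>
    Subfield.subset_closure (Set.mem_union_right _ (Finset.mem_coe.2 hu))
  have hsT : ∀ u ∈ s, u ∈ T := fun u hu =>
    Finset.mem_union_left _ (Finset.mem_union_left _ hu)
  have hdsT : ∀ u ∈ s, d u ∈ T := fun u hu =>
    Finset.mem_union_left _ (Finset.mem_union_right _ (Finset.mem_image_of_mem d hu))
  have hyT : ∀ i : Fin t, y i ∈ T := fun i =>
    Finset.mem_union_right _ (Finset.mem_image_of_mem y (Finset.mem_univ i))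
  -- the base field L = F(s) and its derivatives
  have hLM : ∀ c ∈ Subfield.closure ((F : Set K) ∪ (s : Set K)), c ∈ M ∧ d c ∈ M := by
    apply subfield_dclosed d hadd hmul
    · rintro g (hg | hg)
      · exact hFM hg
      · exact hTM g (hsT g hg)
    · rintro g (hg | hg)
      · exact hFM (hFd g hg)
      · exact hTM _ (hdsT g hg)
  -- M is differentially closed
  have hder : ∀ x ∈ M, d x ∈ M := fun x hx =>
    dx_mem_of_algebraic d hadd hmul _ M hLM x hx (htr' x)
  -- M is everything
  have hallM : ∀ z : K, z ∈ M := by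
    have hle : Subfield.closure
        ((F : Set K) ∪ {z : K | ∃ i : Fin t, ∃ k : ℕ, z = d^[k] (y i)}) ≤ M := by
      apply Subfield.closure_le.2
      rintro z (hz | ⟨i, k, rfl⟩)
      · exact hFM hz
      · induction k with
        | zero => exact hTM _ (hyT i)
        | succ k ihk =>
          rw [Function.iterate_succ_apply']
          exact hder _ ihk
    intro z
    exact hle (by rw [hgen]; exact Subfield.mem_top z)
  -- the subring A generated by F and T, and fractions
  set A : Subring K := Subring.closure ((F : Set K) ∪ (T : Set K)) with hAdef
  have hfrac : ∀ z : K, ∃ p ∈ A, ∃ q ∈ A, q ≠ 0 ∧ z = p / q := by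
    intro z
    have hz : z ∈ Subfield.closure ((F : Set K) ∪ (T : Set K)) := hallM z
    induction hz using Subfield.closure_induction with
    | mem w hw =>
      exact ⟨w, Subring.subset_closure hw, 1, one_mem A, one_ne_zero, (div_one w).symm⟩
    | one => exact ⟨1, one_mem A, 1, one_mem A, one_ne_zero, (div_one 1).symm⟩
    | add a b _ _ ha hb =>
      obtain ⟨p, hp, q, hq, hq0, rfl⟩ := ha
      obtain ⟨p', hp', q', hq', hq0', rfl⟩ := hb
      exact ⟨p * q' + q * p', add_mem (mul_mem hp hq') (mul_mem hq hp'),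
        q * q', mul_mem hq hq', mul_ne_zero hq0 hq0',
        div_add_div p p' hq0 hq0'⟩
    | neg a _ ha =>
      obtain ⟨p, hp, q, hq, hq0, rfl⟩ := ha
      exact ⟨-p, neg_mem hp, q, hq, hq0, (neg_div q p).symm⟩
    | inv a _ ha =>
      obtain ⟨p, hp, q, hq, hq0, rfl⟩ := ha
      rcases eq_or_ne p 0 with rfl | hp0
      · exact ⟨0, zero_mem A, 1, one_mem A, one_ne_zero, by simp⟩
      · exact ⟨q, hq, p, hp, hp0, (inv_div p q).symm ▸ rfl⟩
    | mul a b _ _ ha hb =>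
      obtain ⟨p, hp, q, hq, hq0, rfl⟩ := ha
      obtain ⟨p', hp', q', hq', hq0', rfl⟩ := hb
      exact ⟨p * p', mul_mem hp hp', q * q', mul_mem hq hq', mul_ne_zero hq0 hq0',
        div_mul_div_comm p q p' q'⟩
  -- choose numerators and denominators for derivatives
  choose P hPA Q hQA hQ0 hEq using fun u : K => hfrac (d u)
  set q : K := ∏ u ∈ T, Q u with hqdef
  have hqA : q ∈ A := prod_mem fun u _ => hQA u
  have hq0 : q ≠ 0 := Finset.prod_ne_zero_iff.2 fun u _ => hQ0 u
  set T2 : Finset K := T ∪ {q⁻¹} with hT2def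
  set R : Subring K := Subring.closure ((F : Set K) ∪ (T2 : Set K)) with hRdef
  have hAR : A ≤ R := Subring.closure_mono (Set.union_subset_union_right _
    (by rw [hT2def]; exact_mod_cast Finset.coe_subset.2 (Finset.subset_union_left)))
  have hqinvR : q⁻¹ ∈ R := Subring.subset_closure
    (Set.mem_union_right _ (Finset.mem_coe.2 (Finset.mem_union_right _ (Finset.mem_singleton_self _))))
  have hduR : ∀ u ∈ T, d u ∈ R := by
    intro u hu
    have h1 : Q u * ∏ v ∈ T.erase u, Q v = q := Finset.mul_prod_erase T Q hu
    have hprod0 : (∏ v ∈ T.erase u, Q v) ≠ 0 := Finset.prod_ne_zero_iff.2 fun v _ => hQ0 v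
    have heq : d u = P u * ((∏ v ∈ T.erase u, Q v) * q⁻¹) := by
      rw [hEq u, ← h1]
      field_simp
    rw [heq]
    exact mul_mem (hAR (hPA u))
      (mul_mem (hAR (prod_mem fun v _ => hQA v)) hqinvR)
  have hstep1 : ∀ x ∈ A, x ∈ R ∧ d x ∈ R := by
    apply subring_dclosed d hadd hmul
    · rintro g (hg | hg)
      · exact hAR (Subring.subset_closure (Set.mem_union_left _ hg))
      · exact hAR (Subring.subset_closure (Set.mem_union_right _ hg))
    · rintro g (hg | hg)
      · exact hAR (Subring.subset_closure (Set.mem_union_left _ (hFd g hg)))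
      · exact hduR g (Finset.mem_coe.1 hg)
  have hdqinvR : d q⁻¹ ∈ R := by
    rw [d_inv d hadd hmul q hq0]
    exact neg_mem (mul_mem (mul_mem (hstep1 q hqA).2 hqinvR) hqinvR)
  have hstep2 : ∀ x ∈ R, x ∈ R ∧ d x ∈ R := by
    apply subring_dclosed d hadd hmul
    · exact Subring.subset_closure
    · rintro g (hg | hg)
      · exact hAR (Subring.subset_closure (Set.mem_union_left _ (hFd g hg)))
      · rcases Finset.mem_union.1 (Finset.mem_coe.1 hg) with hg | hg
        · exact hduR g hg
        · rw [Finset.mem_singleton.1 hg]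
          exact hdqinvR
  refine ⟨R, ?_, fun x hx => (hstep2 x hx).2, ⟨T2, hRdef⟩, ?_⟩
  · exact fun x hx => hAR (Subring.subset_closure (Set.mem_union_left _ hx))
  · intro z
    obtain ⟨p, hp, q', hq', hq0', heq⟩ := hfrac z
    exact ⟨p, hAR hp, q', hAR hq', hq0', heq⟩
end

section
/- Let E be a differential field, T ⊆ E a differential subring that is differentially simple (its only differential ideals are 0 and T) and whose field of fractions is E, and let S be a differential subring of E with T ⊆ S ⊆ E. Then S is differentially simple. -/
/-- A differential ideal of a differential subring `T` of `E`, given as a subset `J ⊆ T`: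
closed under `0`, addition, multiplication by elements of `T`, and the derivation `d`. -/
def IsDiffIdeal {E : Type*} [Field E] (d : E → E) (T : Subring E) (J : Set E) : Prop :=
  J ⊆ (T : Set E) ∧ (0 : E) ∈ J ∧ (∀ x ∈ J, ∀ y ∈ J, x + y ∈ J) ∧
    (∀ t ∈ T, ∀ x ∈ J, t * x ∈ J) ∧ (∀ x ∈ J, d x ∈ J)

/-- A differential subring is differentially simple if its only differential ideals
are `0` and the whole ring. -/
def IsDiffSimple {E : Type*} [Field E] (d : E → E) (T : Subring E) : Prop :=
  ∀ J : Set E, IsDiffIdeal d T J → J = {0} ∨ J = (T : Set E)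

/-- If `T ⊆ S ⊆ E` are differential subrings of a differential field `E`,
`T` is differentially simple with field of fractions `E`, then `S` is differentially
simple. -/
theorem stmt_3 {E : Type*} [Field E] (d : E → E)
    (hadd : ∀ x y : E, d (x + y) = d x + d y)
    (hmul : ∀ x y : E, d (x * y) = d x * y + x * d y)
    (T S : Subring E) (hTS : T ≤ S)
    (hTd : ∀ x ∈ T, d x ∈ T) (hSd : ∀ x ∈ S, d x ∈ S)
    (hTsimple : IsDiffSimple d T)
    (hfrac : ∀ z : E, ∃ f ∈ T, ∃ g ∈ T, g ≠ 0 ∧ z = f / g) :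
    IsDiffSimple d S := by
  intro J hJ
  obtain ⟨hJS, h0, haddJ, hmulJ, hdJ⟩ := hJ
  by_cases hz : J = {0}
  · left; exact hz
  · right
    have hJT : IsDiffIdeal d T (J ∩ T) := by
      refine ⟨fun x hx => hx.2, ⟨h0, T.zero_mem⟩, ?_, ?_, ?_⟩
      · intro x hx y hy; exact ⟨haddJ x hx.1 y hy.1, T.add_mem hx.2 hy.2⟩
      · intro t ht x hx; exact ⟨hmulJ t (hTS ht) x hx.1, T.mul_mem ht hx.2⟩
      · intro x hx; exact ⟨hdJ x hx.1, hTd x hx.2⟩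
    rcases hTsimple _ hJT with h | h
    · exfalso
      have hex : ∃ x ∈ J, x ≠ 0 := by
        by_contra hcon
        push_neg at hcon
        apply hz
        ext x
        simp only [Set.mem_singleton_iff]
        exact ⟨fun hx => hcon x hx, fun hx => hx ▸ h0⟩
      obtain ⟨x, hxJ, hx0⟩ := hex
      obtain ⟨f, hf, g, hg, hg0, hx⟩ := hfrac x
      have hfJ : f ∈ J := by
        have := hmulJ g (hTS hg) x hxJ
        rwa [hx, mul_div_cancel₀ f hg0] at this
      have hf0 : f ≠ 0 := by
        intro h'; apply hx0; rw [hx, h', zero_div]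
      have hmem : f ∈ J ∩ T := ⟨hfJ, hf⟩
      rw [h] at hmem
      exact hf0 hmem
    · have h1 : (1 : E) ∈ J := by
        have h1' : (1 : E) ∈ J ∩ (T : Set E) := by rw [h]; exact T.one_mem
        exact h1'.1
      ext x
      constructor
      · exact fun hx => hJS hx
      · intro hx
        have := hmulJ x hx 1 h1
        rwa [mul_one] at this
end

section
/- Let R be a differential ring containing ℚ (characteristic zero). Then any differential ideal of R that is maximal among proper differential ideals is a prime ideal. -/
/-- In a differential ring containing ℚ, a differential ideal maximal
among proper differential ideals is prime. -/
theorem stmt_4 {R : Type*} [CommRing R] [Algebra ℚ R] (d : R → R)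
    (hadd : ∀ x y : R, d (x + y) = d x + d y)
    (hmul : ∀ x y : R, d (x * y) = d x * y + x * d y)
    (I : Ideal R) (hI : ∀ x ∈ I, d x ∈ I) (hne : I ≠ ⊤)
    (hmax : ∀ J : Ideal R, (∀ x ∈ J, d x ∈ J) → J ≠ ⊤ → I ≤ J → J = I) :
    I.IsPrime := by
  -- we can divide by nonzero naturals
  have hdiv : ∀ (n : ℕ), n ≠ 0 → ∀ y : R, (n : R) * y ∈ I → y ∈ I := by
    intro n hn y h
    have h1 : (algebraMap ℚ R (n : ℚ)⁻¹) * ((n : R) * y) ∈ I := I.mul_mem_left _ h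
    have h2 : (algebraMap ℚ R (n : ℚ)⁻¹) * ((n : R) * y) = y := by
      have hc : ((n : R)) = algebraMap ℚ R (n : ℚ) := by simp
      rw [← mul_assoc, hc, ← map_mul,
        inv_mul_cancel₀ (by exact_mod_cast hn : (n : ℚ) ≠ 0)]
      simp
    rwa [h2] at h1
  have hpow : ∀ (y : R) (k : ℕ), d (y ^ (k + 1)) = ((k : R) + 1) * (y ^ k * d y) := by
    intro y k
    induction k with
    | zero =>
      have h1 : d (y * 1) = d y * 1 + y * d 1 := hmul y 1
      have h0 : d (1 : R) = 0 := by
        have := hmul (1 : R) 1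
        simpa using this
      simp [h0] at h1
      simpa using h1
    | succ k ih =>
      have hy : y ^ (k + 2) = y * y ^ (k + 1) := by ring
      rw [hy, hmul, ih]
      push_cast
      ring
  -- I is radical
  have hrad : ∀ x : R, (∃ n : ℕ, x ^ n ∈ I) → x ∈ I := by
    have hd : ∀ z : R, (∃ n : ℕ, z ^ n ∈ I) → (∃ n : ℕ, (d z) ^ n ∈ I) := by
      intro z ⟨n, hn⟩
      rcases n with _ | m
      · exact absurd (I.eq_top_iff_one.mpr (by simpa using hn)) hne
      · have key : ∀ j, j ≤ m → z ^ (m - j) * (d z) ^ (2 * j + 1) ∈ I := by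
          intro j
          induction j with
          | zero =>
            intro _
            have h1 : d (z ^ (m + 1)) ∈ I := hI _ hn
            rw [hpow] at h1
            have := hdiv (m + 1) (by omega) _ (by push_cast; exact h1)
            simpa using this
          | succ j ih =>
            intro hj
            have h1 := ih (by omega)
            set t := m - (j + 1) with ht
            have htm : m - j = t + 1 := by omega
            rw [htm] at h1
            have h2 : d (z ^ (t + 1) * (d z) ^ (2 * j + 1)) ∈ I := hI _ h1
            have h3 : d z * d (z ^ (t + 1) * (d z) ^ (2 * j + 1)) ∈ I := I.mul_mem_left _ h2
            have h4 : ((2 * j : R) + 1) * ((z ^ (t + 1) * (d z) ^ (2 * j + 1)) * d (d z)) ∈ I :=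
              I.mul_mem_left _ (I.mul_mem_right _ h1)
            have heq : d z * d (z ^ (t + 1) * (d z) ^ (2 * j + 1))
                = ((t : R) + 1) * (z ^ t * (d z) ^ (2 * (j + 1) + 1))
                  + ((2 * j : R) + 1) * ((z ^ (t + 1) * (d z) ^ (2 * j + 1)) * d (d z)) := by
              have e1 : (2 * j + 1) = (2 * j) + 1 := rfl
              rw [hmul, hpow z t, e1, hpow (d z) (2 * j)]
              push_cast
              ring
            have h5 : ((t : R) + 1) * (z ^ t * (d z) ^ (2 * (j + 1) + 1)) ∈ I := by
              have := I.sub_mem h3 h4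
              rw [heq] at this
              simpa using this
            have := hdiv (t + 1) (by omega) _ (by push_cast; exact h5)
            simpa [ht] using this
        have := key m le_rfl
        simp at this
        exact ⟨2 * m + 1, this⟩
    intro x hx
    have hJ : ∀ z ∈ I.radical, d z ∈ I.radical := by
      intro z hz
      rw [Ideal.mem_radical_iff] at hz ⊢
      exact hd z hz
    have hne' : I.radical ≠ ⊤ := by
      intro h
      have : (1 : R) ∈ I.radical := h ▸ Submodule.mem_top
      rw [Ideal.mem_radical_iff] at this
      obtain ⟨n, hn⟩ := this
      exact hne (I.eq_top_iff_one.mpr (by simpa using hn))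
    have heq : I.radical = I := hmax I.radical hJ hne' Ideal.le_radical
    have : x ∈ I.radical := Ideal.mem_radical_iff.mpr hx
    rwa [heq] at this
  constructor
  · exact hne
  · intro a b hab
    by_cases hb : b ∈ I
    · exact Or.inr hb
    · left
      set J := I.colon (Ideal.span {b}) with hJdef
      have hmem : ∀ x : R, x ∈ J ↔ x * b ∈ I := fun x => Ideal.mem_colon_span_singleton
      have hJd : ∀ x ∈ J, d x ∈ J := by
        intro x hx
        rw [hmem] at hx ⊢
        have h1 : d (x * b) ∈ I := hI _ hx
        have h2 : b * d (x * b) ∈ I := I.mul_mem_left _ h1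
        have h3 : (x * b) * d b ∈ I := I.mul_mem_right _ hx
        have h4 : d x * b ^ 2 ∈ I := by
          have := I.sub_mem h2 h3
          have heq : b * d (x * b) - (x * b) * d b = d x * b ^ 2 := by
            rw [hmul]; ring
          rwa [heq] at this
        apply hrad
        refine ⟨2, ?_⟩
        have : (d x * b) ^ 2 = (d x) * (d x * b ^ 2) := by ring
        rw [this]
        exact I.mul_mem_left _ h4
      have hJne : J ≠ ⊤ := by
        intro h
        have : (1 : R) ∈ J := h ▸ Submodule.mem_top
        rw [hmem] at this
        simp at this
        exact hb this
      have hIJ : I ≤ J := fun x hx => (hmem x).mpr (I.mul_mem_right _ hx)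
      have := hmax J hJd hJne hIJ
      have ha : a ∈ J := (hmem a).mpr hab
      rwa [this] at ha
end
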